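/- arXiv:1909.12864 — 3 statements merged into one kernel-verified Lean document; each statement's English description precedes it below -/
import Mathlib

section
/- Let n ≥ 2, let η0 > 0, and for each i = 1,…,n let γ_i : ℝ → ℂ be given (representing the value g_i(jη)^{-1} of the inverse of the i-th generator transfer function on the imaginary axis). Assume there are constants M1, M2 > 0 such that for all η ∈ [−η0, η0]: ∑_{i=1}^n γ_i(η) ≠ 0, |n · (∑_{i=1}^n γ_i(η))^{-1}| ≤ M1, and max_{1≤i≤n} |γ_i(η)| ≤ M2. Then for every ε > 0 there exists Λ > 0 such that for every real symmetric positive-semidefinite n×n matrix L with L·𝟙 = 0 whose second-smallest eigenvalue λ2(L) satisfies λ2(L) ≥ Λ, and for every η ∈ [−η0, η0] with η ≠ 0, the complex matrix diag(γ_1(η),…,γ_n(η)) + L/(jη) is invertible and ‖(diag(γ_1(η),…,γ_n(η)) + L/(jη))^{-1} − (∑_{i=1}^n γ_i(η))^{-1} 𝟙𝟙ᵀ‖ ≤ ε, where ‖·‖ is the spectral (ℓ2-induced operator) norm, j = √−1, and 𝟙 ∈ ℝ^n is the all-ones vector. -/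
/-!
For `A v = u` with `A = diag γ(η) + L / (jη)`, split `v = α 𝟙 + w` with `w ⊥ 𝟙`. As `𝟙ᵀ L = 0`,
pairing with `𝟙` gives `s α + ⟪𝟙, diag γ(η) w⟫ = ⟪𝟙, u⟫` where `s = ∑ γᵢ(η)`, so `v` equals
`s⁻¹ ⟪𝟙, u⟫ 𝟙` up to `O(‖w‖)`. Pairing with `w` gives `⟪w, L w⟫ = jη ⟪w, u - diag γ(η) v⟫`, and
`λ₂(L) ‖w‖² ≤ Re ⟪w, L w⟫` then forces `‖w‖ = O(η₀ / λ₂(L)) ‖u‖`, uniformly in `η`.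

The estimate is carried out in any complex inner product space, with `e`, `D`, `K`, `z` in the
roles of `𝟙`, `diag γ(η)`, `L`, `jη`.
-/

open Matrix
open scoped Matrix.Norms.L2Operator RealInnerProductSpace

/-- The second-smallest eigenvalue (algebraic connectivity) of a real symmetric
positive-semidefinite matrix `L` with `L 𝟙 = 0`: by Courant–Fischer it equals the
infimum of the Rayleigh quotient `⟪v, L v⟫` over unit vectors `v` orthogonal to the
all-ones vector `𝟙`. -/
noncomputable def lambda2 {n : ℕ} (L : Matrix (Fin n) (Fin n) ℝ) : ℝ :=
  ⨅ v : {v : EuclideanSpace ℝ (Fin n) //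
      ⟪v, (WithLp.equiv 2 (Fin n → ℝ)).symm 1⟫ = 0 ∧ ‖v‖ = 1},
    ⟪(v : EuclideanSpace ℝ (Fin n)),
      Matrix.toEuclideanCLM (𝕜 := ℝ) L (v : EuclideanSpace ℝ (Fin n))⟫

open scoped InnerProductSpace
open WithLp

theorem mul_le_of_mul_sq_le_add {l b c x y : ℝ} (hx : 0 ≤ x) (hby : 0 ≤ b * y)
    (hc : 2 * c ≤ l) (h : l * x ^ 2 ≤ b * x * y + c * x ^ 2) : l * x ≤ 2 * b * y := by
  rcases hx.eq_or_lt with rfl | hx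
  · linarith
  · refine le_of_mul_le_mul_right ?_ hx
    nlinarith

section Coherence

variable {E : Type*} [NormedAddCommGroup E] [InnerProductSpace ℂ E]

theorem exists_eq_smul_add_inner_eq_zero (e v : E) :
    ∃ (α : ℂ) (w : E), v = α • e + w ∧ ⟪e, w⟫_ℂ = 0 := by
  obtain ⟨y, hy, w, hw, rfl⟩ := (ℂ ∙ e).exists_add_mem_mem_orthogonal v
  obtain ⟨α, rfl⟩ := Submodule.mem_span_singleton.mp hy
  exact ⟨α, w, rfl, Submodule.mem_orthogonal_singleton_iff_inner_right.mp hw⟩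

theorem norm_inv_mul_inner_smul_le {e : E} {s : ℂ} {M : ℝ} (hM : ‖e‖ ^ 2 * ‖s⁻¹‖ ≤ M)
    (x : E) : ‖(s⁻¹ * ⟪e, x⟫_ℂ) • e‖ ≤ M * ‖x‖ :=
  calc ‖(s⁻¹ * ⟪e, x⟫_ℂ) • e‖ = ‖s⁻¹‖ * ‖⟪e, x⟫_ℂ‖ * ‖e‖ := by rw [norm_smul, norm_mul]
    _ ≤ ‖s⁻¹‖ * (‖e‖ * ‖x‖) * ‖e‖ := by gcongr; exact norm_inner_le_norm e x
    _ = ‖e‖ ^ 2 * ‖s⁻¹‖ * ‖x‖ := by ring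
    _ ≤ M * ‖x‖ := by gcongr

variable {e v w : E} {D K : E →L[ℂ] E} {α z : ℂ} {M1 M2 : ℝ}

theorem inner_apply_eq_of_eq_smul_add (hK : (K : E →ₗ[ℂ] E).IsSymmetric) (hKe : K e = 0)
    (hv : v = α • e + w) :
    ⟪e, (D + z⁻¹ • K) v⟫_ℂ = ⟪e, D e⟫_ℂ * α + ⟪e, D w⟫_ℂ := by
  have hKv : ⟪e, K v⟫_ℂ = 0 := by
    rw [← ContinuousLinearMap.coe_coe, ← hK, ContinuousLinearMap.coe_coe, hKe, inner_zero_left]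
  rw [_root_.add_apply, _root_.smul_apply, inner_add_right, inner_smul_right, hKv, mul_zero,
    add_zero, hv, map_add, map_smul, inner_add_right, inner_smul_right, mul_comm]

theorem norm_le_and_norm_sub_le_of_inner_eq (hs : ⟪e, D e⟫_ℂ ≠ 0) (hM1 : ‖e‖ ^ 2 * ‖(⟪e, D e⟫_ℂ)⁻¹‖ ≤ M1)
    (hD : ‖D‖ ≤ M2) (hv : v = α • e + w) {u : E} (hu : ⟪e, u⟫_ℂ = ⟪e, D e⟫_ℂ * α + ⟪e, D w⟫_ℂ) :
    ‖v‖ ≤ M1 * ‖u‖ + (1 + M1 * M2) * ‖w‖ ∧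
      ‖v - ((⟪e, D e⟫_ℂ)⁻¹ * ⟪e, u⟫_ℂ) • e‖ ≤ (1 + M1 * M2) * ‖w‖ := by
  have hM1₀ : 0 ≤ M1 := (by positivity : 0 ≤ ‖e‖ ^ 2 * ‖(⟪e, D e⟫_ℂ)⁻¹‖).trans hM1
  have hDw : M1 * ‖D w‖ ≤ M1 * M2 * ‖w‖ := by
    rw [mul_assoc]; exact mul_le_mul_of_nonneg_left (D.le_of_opNorm_le hD w) hM1₀
  have hα : α = (⟪e, D e⟫_ℂ)⁻¹ * ⟪e, u⟫_ℂ - (⟪e, D e⟫_ℂ)⁻¹ * ⟪e, D w⟫_ℂ := by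
    rw [hu]; field_simp; ring
  have hcoh := norm_inv_mul_inner_smul_le hM1 u
  have hdev := norm_inv_mul_inner_smul_le hM1 (D w)
  constructor
  · calc ‖v‖ ≤ ‖((⟪e, D e⟫_ℂ)⁻¹ * ⟪e, u⟫_ℂ) • e‖ + ‖((⟪e, D e⟫_ℂ)⁻¹ * ⟪e, D w⟫_ℂ) • e‖ + ‖w‖ := by
          rw [hv, hα, sub_smul]
          exact (norm_add_le _ _).trans (by gcongr; exact norm_sub_le _ _)
      _ ≤ M1 * ‖u‖ + (1 + M1 * M2) * ‖w‖ := by linarith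
  · calc ‖v - ((⟪e, D e⟫_ℂ)⁻¹ * ⟪e, u⟫_ℂ) • e‖
          = ‖w - ((⟪e, D e⟫_ℂ)⁻¹ * ⟪e, D w⟫_ℂ) • e‖ := by
          rw [hv, hα, sub_smul]; congr 1; abel
      _ ≤ (1 + M1 * M2) * ‖w‖ := by linarith [norm_sub_le w (((⟪e, D e⟫_ℂ)⁻¹ * ⟪e, D w⟫_ℂ) • e)]

theorem mul_norm_sq_le_of_coercive {l : ℝ} (hKe : K e = 0) (hz : z ≠ 0)
    (hcoer : ∀ w, ⟪e, w⟫_ℂ = 0 → l * ‖w‖ ^ 2 ≤ RCLike.re ⟪w, K w⟫_ℂ)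
    (hv : v = α • e + w) (hw : ⟪e, w⟫_ℂ = 0) :
    l * ‖w‖ ^ 2 ≤ ‖z‖ * (‖w‖ * ‖(D + z⁻¹ • K) v‖ + ‖w‖ * (‖D‖ * ‖v‖)) := by
  have hKv : K v = K w := by rw [hv, map_add, map_smul, hKe, smul_zero, zero_add]
  have hKw : ⟪w, K w⟫_ℂ = z * (⟪w, (D + z⁻¹ • K) v⟫_ℂ - ⟪w, D v⟫_ℂ) := by
    simp only [_root_.add_apply, _root_.smul_apply, inner_add_right,
      inner_smul_right, hKv]
    field_simp; ring
  calc l * ‖w‖ ^ 2 ≤ RCLike.re ⟪w, K w⟫_ℂ := hcoer w hw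
    _ ≤ ‖⟪w, K w⟫_ℂ‖ := RCLike.re_le_norm _
    _ ≤ ‖z‖ * (‖w‖ * ‖(D + z⁻¹ • K) v‖ + ‖w‖ * (‖D‖ * ‖v‖)) := by
      rw [hKw, norm_mul]
      gcongr
      refine (norm_sub_le _ _).trans (add_le_add (norm_inner_le_norm _ _) ?_)
      exact (norm_inner_le_norm _ _).trans (by gcongr; exact D.le_opNorm v)

theorem mul_norm_sub_inner_smul_le {l η0 : ℝ} (hs : ⟪e, D e⟫_ℂ ≠ 0)
    (hM1 : ‖e‖ ^ 2 * ‖(⟪e, D e⟫_ℂ)⁻¹‖ ≤ M1) (hD : ‖D‖ ≤ M2) (hK : (K : E →ₗ[ℂ] E).IsSymmetric)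
    (hKe : K e = 0) (hcoer : ∀ w, ⟪e, w⟫_ℂ = 0 → l * ‖w‖ ^ 2 ≤ RCLike.re ⟪w, K w⟫_ℂ)
    (hz : z ≠ 0) (hzη : ‖z‖ ≤ η0) (hl : 2 * η0 * M2 * (1 + M1 * M2) ≤ l) (v : E) :
    l * ‖v - ((⟪e, D e⟫_ℂ)⁻¹ * ⟪e, (D + z⁻¹ • K) v⟫_ℂ) • e‖ ≤
      2 * η0 * (1 + M1 * M2) ^ 2 * ‖(D + z⁻¹ • K) v‖ := by
  have hM1₀ : 0 ≤ M1 := (by positivity : 0 ≤ ‖e‖ ^ 2 * ‖(⟪e, D e⟫_ℂ)⁻¹‖).trans hM1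
  have hM2₀ : 0 ≤ M2 := (norm_nonneg D).trans hD
  have hη0 : 0 ≤ η0 := (norm_nonneg z).trans hzη
  have hl₀ : 0 ≤ l := le_trans (by positivity) hl
  obtain ⟨α, w, hv, hw⟩ := exists_eq_smul_add_inner_eq_zero e v
  set u := (D + z⁻¹ • K) v
  obtain ⟨hv_le, hdev⟩ := norm_le_and_norm_sub_le_of_inner_eq hs hM1 hD hv (inner_apply_eq_of_eq_smul_add hK hKe hv)
  have hDv : ‖D‖ * ‖v‖ ≤ M2 * (M1 * ‖u‖ + (1 + M1 * M2) * ‖w‖) :=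
    mul_le_mul hD hv_le (norm_nonneg v) hM2₀
  have hw_sq : l * ‖w‖ ^ 2 ≤
      η0 * (1 + M1 * M2) * ‖w‖ * ‖u‖ + η0 * M2 * (1 + M1 * M2) * ‖w‖ ^ 2 :=
    calc l * ‖w‖ ^ 2 ≤ ‖z‖ * (‖w‖ * ‖u‖ + ‖w‖ * (‖D‖ * ‖v‖)) :=
          mul_norm_sq_le_of_coercive hKe hz hcoer hv hw
      _ ≤ η0 * (‖w‖ * ‖u‖ + ‖w‖ * (M2 * (M1 * ‖u‖ + (1 + M1 * M2) * ‖w‖))) := by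
          gcongr
      _ = _ := by ring
  have hw_le : l * ‖w‖ ≤ 2 * (η0 * (1 + M1 * M2)) * ‖u‖ :=
    mul_le_of_mul_sq_le_add (c := η0 * M2 * (1 + M1 * M2)) (norm_nonneg w) (by positivity)
      (by linarith) (by linarith)
  calc l * ‖v - ((⟪e, D e⟫_ℂ)⁻¹ * ⟪e, u⟫_ℂ) • e‖ ≤ l * ((1 + M1 * M2) * ‖w‖) := by gcongr
    _ = (1 + M1 * M2) * (l * ‖w‖) := by ring
    _ ≤ (1 + M1 * M2) * (2 * (η0 * (1 + M1 * M2)) * ‖u‖) := by gcongr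
    _ = _ := by ring

theorem norm_sub_inner_smul_le {l η0 ε : ℝ} (hε : 0 < ε) (hs : ⟪e, D e⟫_ℂ ≠ 0)
    (hM1 : ‖e‖ ^ 2 * ‖(⟪e, D e⟫_ℂ)⁻¹‖ ≤ M1) (hD : ‖D‖ ≤ M2) (hK : (K : E →ₗ[ℂ] E).IsSymmetric)
    (hKe : K e = 0) (hcoer : ∀ w, ⟪e, w⟫_ℂ = 0 → l * ‖w‖ ^ 2 ≤ RCLike.re ⟪w, K w⟫_ℂ)
    (hz : z ≠ 0) (hzη : ‖z‖ ≤ η0)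
    (hl : 2 * η0 * (1 + M1 * M2) * (M2 + (1 + M1 * M2) / ε) ≤ l) (v : E) :
    ‖v - ((⟪e, D e⟫_ℂ)⁻¹ * ⟪e, (D + z⁻¹ • K) v⟫_ℂ) • e‖ ≤ ε * ‖(D + z⁻¹ • K) v‖ := by
  have hM1₀ : 0 ≤ M1 := (by positivity : 0 ≤ ‖e‖ ^ 2 * ‖(⟪e, D e⟫_ℂ)⁻¹‖).trans hM1
  have hM2₀ : 0 ≤ M2 := (norm_nonneg D).trans hD
  have hη0 : 0 < η0 := (norm_pos_iff.mpr hz).trans_le hzη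
  have hl_pos : 0 < l := lt_of_lt_of_le (by positivity) hl
  have hε_l : 2 * η0 * (1 + M1 * M2) ^ 2 ≤ ε * l :=
    calc 2 * η0 * (1 + M1 * M2) ^ 2
        ≤ ε * (2 * η0 * (1 + M1 * M2) * (M2 + (1 + M1 * M2) / ε)) := by
          rw [mul_add, mul_div_assoc', mul_add, mul_div_cancel₀ _ hε.ne']
          nlinarith [show 0 ≤ ε * (2 * η0 * (1 + M1 * M2) * M2) by positivity]
      _ ≤ ε * l := by gcongr
  have hl' : 2 * η0 * M2 * (1 + M1 * M2) ≤ l :=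
    le_trans (by nlinarith [show 0 ≤ 2 * η0 * (1 + M1 * M2) * ((1 + M1 * M2) / ε) by positivity]) hl
  refine le_of_mul_le_mul_left ?_ hl_pos
  calc _ ≤ 2 * η0 * (1 + M1 * M2) ^ 2 * ‖(D + z⁻¹ • K) v‖ :=
        mul_norm_sub_inner_smul_le hs hM1 hD hK hKe hcoer hz hzη hl' v
    _ ≤ ε * l * ‖(D + z⁻¹ • K) v‖ := by gcongr
    _ = _ := by ring

end Coherence

section Laplacian

variable {ι : Type*} [Fintype ι]

theorem norm_toLp_one_sq : ‖(toLp 2 (1 : ι → ℂ) : EuclideanSpace ℂ ι)‖ ^ 2 = Fintype.card ι := by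
  simp [EuclideanSpace.norm_sq_eq]

variable [DecidableEq ι]

theorem inner_one_toEuclideanCLM_diagonal_one (g : ι → ℂ) :
    ⟪(toLp 2 1 : EuclideanSpace ℂ ι), toEuclideanCLM (𝕜 := ℂ) (diagonal g) (toLp 2 1)⟫_ℂ =
      ∑ i, g i := by
  simp [EuclideanSpace.inner_toLp_toLp, dotProduct, mulVec_diagonal]

theorem toEuclideanCLM_vecMulVec_one_one (u : EuclideanSpace ℂ ι) :
    toEuclideanCLM (𝕜 := ℂ) (vecMulVec 1 1 : Matrix ι ι ℂ) u = ⟪toLp 2 1, u⟫_ℂ • toLp 2 1 := by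
  ext i
  simp [EuclideanSpace.inner_eq_star_dotProduct, vecMulVec, mulVec, dotProduct]

theorem toEuclideanCLM_map_ofReal_one {L : Matrix ι ι ℝ} (hL : L *ᵥ 1 = 0) :
    toEuclideanCLM (𝕜 := ℂ) (L.map Complex.ofReal) (toLp 2 (1 : ι → ℂ)) = 0 := by
  ext i
  change (L.map Complex.ofRealHom *ᵥ (Complex.ofRealHom ∘ 1)) i = 0
  rw [← RingHom.map_mulVec, hL, Pi.zero_apply, map_zero]

theorem isSymmetric_toEuclideanCLM_map_ofReal {L : Matrix ι ι ℝ} (hL : L.IsHermitian) :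
    (toEuclideanCLM (𝕜 := ℂ) (L.map Complex.ofReal) :
      EuclideanSpace ℂ ι →ₗ[ℂ] EuclideanSpace ℂ ι).IsSymmetric :=
  isSymmetric_toEuclideanLin_iff.mpr (hL.map _ fun _ ↦ (Complex.conj_ofReal _).symm)

end Laplacian

section Connectivity

variable {n : ℕ} {L : Matrix (Fin n) (Fin n) ℝ}

theorem lambda2_mul_norm_sq_le (hL : L.PosSemidef) {y : EuclideanSpace ℝ (Fin n)}
    (hy : ⟪y, toLp 2 1⟫ = 0) : lambda2 L * ‖y‖ ^ 2 ≤ ⟪y, toEuclideanCLM (𝕜 := ℝ) L y⟫ := by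
  rcases eq_or_ne y 0 with rfl | hy0
  · simp
  have hbdd : BddBelow (Set.range fun v : {v : EuclideanSpace ℝ (Fin n) //
      ⟪v, (WithLp.equiv 2 (Fin n → ℝ)).symm 1⟫ = 0 ∧ ‖v‖ = 1} =>
        ⟪(v : EuclideanSpace ℝ (Fin n)), toEuclideanCLM (𝕜 := ℝ) L v⟫) := by
    refine ⟨0, ?_⟩
    rintro _ ⟨v, rfl⟩
    dsimp only
    rw [inner_toEuclideanCLM]
    exact hL.dotProduct_mulVec_nonneg _
  have hv : ⟪‖y‖⁻¹ • y, (WithLp.equiv 2 (Fin n → ℝ)).symm 1⟫ = 0 ∧ ‖‖y‖⁻¹ • y‖ = 1 :=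
    ⟨by rw [real_inner_smul_left]; exact mul_eq_zero_of_right _ hy, norm_smul_inv_norm hy0⟩
  calc lambda2 L * ‖y‖ ^ 2
      ≤ ⟪‖y‖⁻¹ • y, toEuclideanCLM (𝕜 := ℝ) L (‖y‖⁻¹ • y)⟫ * ‖y‖ ^ 2 := by
        gcongr; exact ciInf_le hbdd ⟨_, hv⟩
    _ = ⟪y, toEuclideanCLM (𝕜 := ℝ) L y⟫ := by
        rw [map_smul, real_inner_smul_left, real_inner_smul_right]
        field_simp

theorem re_inner_toEuclideanCLM_map_ofReal (w : EuclideanSpace ℂ (Fin n)) :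
    RCLike.re ⟪w, toEuclideanCLM (𝕜 := ℂ) (L.map Complex.ofReal) w⟫_ℂ =
      ⟪toLp 2 fun i ↦ (w i).re, toEuclideanCLM (𝕜 := ℝ) L (toLp 2 fun i ↦ (w i).re)⟫ +
        ⟪toLp 2 fun i ↦ (w i).im, toEuclideanCLM (𝕜 := ℝ) L (toLp 2 fun i ↦ (w i).im)⟫ := by
  rw [inner_toEuclideanCLM, inner_toEuclideanCLM, EuclideanSpace.inner_eq_star_dotProduct]
  simp only [dotProduct, mulVec, ofLp_toEuclideanCLM, map_apply, Pi.star_apply, RCLike.star_def,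
    RCLike.re_to_complex, Finset.sum_mul, Complex.re_sum, Finset.mul_sum, ← Finset.sum_add_distrib]
  refine Finset.sum_congr rfl fun i _ ↦ Finset.sum_congr rfl fun j _ ↦ ?_
  simp only [Complex.mul_re, Complex.mul_im, Complex.conj_re, Complex.conj_im, Complex.ofReal_re,
    Complex.ofReal_im]
  ring

theorem lambda2_mul_norm_sq_le_re_inner (hL : L.PosSemidef) {w : EuclideanSpace ℂ (Fin n)}
    (hw : ⟪toLp 2 1, w⟫_ℂ = 0) :
    lambda2 L * ‖w‖ ^ 2 ≤ RCLike.re ⟪w, toEuclideanCLM (𝕜 := ℂ) (L.map Complex.ofReal) w⟫_ℂ := by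
  have hsum : ∑ i, w i = 0 := by
    simpa [EuclideanSpace.inner_eq_star_dotProduct, dotProduct] using hw
  have hre : ⟪toLp 2 fun i ↦ (w i).re, toLp 2 1⟫ = 0 := by
    simpa [EuclideanSpace.inner_toLp_toLp, dotProduct, Complex.re_sum] using
      congr_arg Complex.re hsum
  have him : ⟪toLp 2 fun i ↦ (w i).im, toLp 2 1⟫ = 0 := by
    simpa [EuclideanSpace.inner_toLp_toLp, dotProduct, Complex.im_sum] using
      congr_arg Complex.im hsum
  have hnorm : ‖w‖ ^ 2 = ‖(toLp 2 fun i ↦ (w i).re : EuclideanSpace ℝ (Fin n))‖ ^ 2 +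
      ‖(toLp 2 fun i ↦ (w i).im : EuclideanSpace ℝ (Fin n))‖ ^ 2 := by
    simp only [EuclideanSpace.norm_sq_eq, ← Finset.sum_add_distrib, Complex.sq_norm,
      Complex.normSq_apply, Real.norm_eq_abs, sq_abs]
    refine Finset.sum_congr rfl fun i _ ↦ ?_
    ring
  rw [re_inner_toEuclideanCLM_map_ofReal, hnorm, mul_add]
  exact add_le_add (lambda2_mul_norm_sq_le hL hre) (lambda2_mul_norm_sq_le hL him)

end Connectivity

theorem Matrix.isUnit_and_l2_opNorm_inv_sub_le {ι 𝕜 : Type*} [Fintype ι] [DecidableEq ι]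
    [RCLike 𝕜] {A P : Matrix ι ι 𝕜} {δ : ℝ} (hδ : 0 ≤ δ)
    (h : ∀ v, ‖v - toEuclideanCLM (𝕜 := 𝕜) P (toEuclideanCLM (𝕜 := 𝕜) A v)‖ ≤
      δ * ‖toEuclideanCLM (𝕜 := 𝕜) A v‖) :
    IsUnit A ∧ ‖A⁻¹ - P‖ ≤ δ := by
  have hinj : Function.Injective (toEuclideanCLM (𝕜 := 𝕜) A) :=
    (injective_iff_map_eq_zero _).mpr fun v hv ↦ by simpa [hv] using h v
  have hA : IsUnit A := mulVec_injective_iff_isUnit.mp fun x y hxy ↦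
    WithLp.toLp_injective 2 (hinj (congr_arg (WithLp.toLp 2) hxy))
  refine ⟨hA, ?_⟩
  have hAinv (u) : toEuclideanCLM (𝕜 := 𝕜) A (toEuclideanCLM (𝕜 := 𝕜) A⁻¹ u) = u := by
    rw [← mul_apply_eq_comp, ← map_mul, mul_nonsing_inv _ ((isUnit_iff_isUnit_det A).mp hA),
      map_one, one_apply_eq_self]
  rw [← l2_opNorm_toEuclideanCLM]
  refine ContinuousLinearMap.opNorm_le_bound _ hδ fun u ↦ ?_
  simpa [map_sub, hAinv] using h (toEuclideanCLM (𝕜 := 𝕜) A⁻¹ u)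

/-- **Theorem 1.** For `n = m+2 ≥ 2` generators with `γᵢ(η) = gᵢ(jη)⁻¹`,
suppose on `[-η0, η0]` the sum `∑ γᵢ(η)` never vanishes, `|n (∑ γᵢ(η))⁻¹| ≤ M1` and
`max_i |γᵢ(η)| ≤ M2`. Then for every `ε > 0` there is `Λ > 0` such that for every real
symmetric PSD Laplacian `L` with `L 𝟙 = 0` and algebraic connectivity `λ₂(L) ≥ Λ`, and
every nonzero `η ∈ [-η0, η0]`, the matrix `diag(γ(η)) + L/(jη)` is invertible and its
inverse is within `ε` (in spectral norm) of `(∑ γᵢ(η))⁻¹ 𝟙𝟙ᵀ`. -/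
theorem stmt_0 {m : ℕ} (η0 : ℝ) (hη0 : 0 < η0)
    (γ : Fin (m + 2) → ℝ → ℂ) (M1 M2 : ℝ) (hM1 : 0 < M1) (hM2 : 0 < M2)
    (hsum : ∀ η ∈ Set.Icc (-η0) η0, ∑ i, γ i η ≠ 0)
    (hbar : ∀ η ∈ Set.Icc (-η0) η0, ‖((m + 2 : ℕ) : ℂ) * (∑ i, γ i η)⁻¹‖ ≤ M1)
    (hgi : ∀ η ∈ Set.Icc (-η0) η0, ∀ i, ‖γ i η‖ ≤ M2) :
    ∀ ε > 0, ∃ Λ > 0, ∀ L : Matrix (Fin (m + 2)) (Fin (m + 2)) ℝ,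
      L.IsSymm → L.PosSemidef → L *ᵥ 1 = 0 → Λ ≤ lambda2 L →
      ∀ η ∈ Set.Icc (-η0) η0, η ≠ 0 →
        IsUnit (Matrix.diagonal (fun i => γ i η) +
            (Complex.I * (η : ℂ))⁻¹ • L.map Complex.ofReal) ∧
          ‖(Matrix.diagonal (fun i => γ i η) +
              (Complex.I * (η : ℂ))⁻¹ • L.map Complex.ofReal)⁻¹ -
            (∑ i, γ i η)⁻¹ • Matrix.vecMulVec 1 1‖ ≤ ε := by
  intro ε hε
  set C := 1 + M1 * M2
  refine ⟨2 * η0 * C * (M2 + C / ε), by positivity, fun L _ hL hL1 hΛ η hη hη_ne ↦ ?_⟩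
  set z := Complex.I * (η : ℂ)
  set D := toEuclideanCLM (𝕜 := ℂ) (diagonal fun i ↦ γ i η)
  set K := toEuclideanCLM (𝕜 := ℂ) (L.map Complex.ofReal)
  have hs := inner_one_toEuclideanCLM_diagonal_one fun i ↦ γ i η
  have hs_inv : ‖(toLp 2 1 : EuclideanSpace ℂ (Fin (m + 2)))‖ ^ 2 *
      ‖(⟪toLp 2 1, D (toLp 2 1)⟫_ℂ)⁻¹‖ ≤ M1 := by
    rw [norm_toLp_one_sq, hs, Fintype.card_fin, ← Complex.norm_natCast, ← norm_mul]
    exact hbar η hη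
  have hD : ‖D‖ ≤ M2 := by
    rw [l2_opNorm_toEuclideanCLM, l2_opNorm_diagonal]
    exact (pi_norm_le_iff_of_nonneg hM2.le).mpr (hgi η hη)
  have hz : ‖z‖ ≤ η0 := by simpa [z] using abs_le.mpr hη
  refine isUnit_and_l2_opNorm_inv_sub_le hε.le fun v ↦ ?_
  rw [map_add, map_smul, map_smul, _root_.smul_apply, toEuclideanCLM_vecMulVec_one_one, smul_smul,
    ← hs]
  exact norm_sub_inner_smul_le hε (hs ▸ hsum η hη) hs_inv hD
    (isSymmetric_toEuclideanCLM_map_ofReal hL.isHermitian) (toEuclideanCLM_map_ofReal_one hL1)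
    (fun w hw ↦ lambda2_mul_norm_sq_le_re_inner hL hw) (by simp [z, hη_ne]) hz hΛ v
end

section
/- Let n ≥ 2, let L be a real symmetric positive-semidefinite n×n matrix with L·𝟙 = 0 and eigenvalues 0 = λ1(L) ≤ λ2(L) ≤ … ≤ λn(L), let s0 ∈ ℂ with s0 ≠ 0, and let γ_1,…,γ_n ∈ ℂ with ∑_{i=1}^n γ_i ≠ 0. Set D = diag(γ_1,…,γ_n) and ḡ = n · (∑_{i=1}^n γ_i)^{-1}, and suppose M1, M2 > 0 satisfy |ḡ| ≤ M1 and max_{1≤i≤n} |γ_i| ≤ M2. If λ2(L)/|s0| > M2 + M1·M2², then the complex matrix D + L/s0 is invertible and ‖(D + L/s0)^{-1} − (1/n)·ḡ·𝟙𝟙ᵀ‖ ≤ (M1²M2² + 2M1M2 + M1M2²/(λ2(L)/|s0| − M2)) / (λ2(L)/|s0| − M2 − M1M2²) + 1/(λ2(L)/|s0| − M2), where ‖·‖ is the spectral norm and 𝟙 ∈ ℝ^n is the all-ones vector. -/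
/-!
With `P = 𝟙𝟙ᵀ/n`, the matrix `A = L/s0` kills `𝟙` on both sides (`L𝟙 = 0`, `L` symmetric) and
is bounded below by `λ₂(L)/|s0|` on `𝟙ᗮ`, so the compression of `T = D + A` to `𝟙ᗮ` has an
inverse `K` there with `‖K‖ ≤ 1/ℓ`, `ℓ = λ₂(L)/|s0| - M2`. The `𝟙`-block of `T` is the scalar
`1/ḡ`, and the Schur complement of the compression is `1/ḡ - c` with `|c| ≤ M2²/ℓ`. Block
inversion writes `T⁻¹` as `τ P + K` plus three terms of size `O(M2/ℓ)`, where `τ = (1/ḡ - c)⁻¹`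
is close to `ḡ` because `|ḡ c| ≤ M1 M2²/ℓ < 1`; the triangle inequality gives the bound.
-/

open Matrix
open scoped Matrix.Norms.L2Operator RealInnerProductSpace

theorem exists_mul_inv_sub_eq_one {g c : ℂ} {M q : ℝ} (hg0 : g ≠ 0) (hg : ‖g‖ ≤ M)
    (hc : ‖c‖ ≤ q) (hq : M * q < 1) :
    ∃ τ : ℂ, τ * (g⁻¹ - c) = 1 ∧ ‖τ‖ ≤ M / (1 - M * q) ∧
      ‖τ - g‖ ≤ M ^ 2 * q / (1 - M * q) := by
  have hM : 0 ≤ M := (norm_nonneg g).trans hg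
  have hgc : ‖g * c‖ ≤ M * q := by
    rw [norm_mul]; exact mul_le_mul hg hc (norm_nonneg c) hM
  have hden : 1 - M * q ≤ ‖1 - g * c‖ := by
    have := norm_sub_norm_le (1 : ℂ) (g * c)
    rw [norm_one] at this; linarith
  have hpos : 0 < 1 - M * q := by linarith
  have hne : 1 - g * c ≠ 0 := norm_pos_iff.mp (hpos.trans_le hden)
  refine ⟨g / (1 - g * c), by field_simp, ?_, ?_⟩
  · rw [norm_div]
    exact div_le_div₀ hM hg hpos hden
  · have hsub : g / (1 - g * c) - g = g * (g * c) / (1 - g * c) := by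
      field_simp; ring
    rw [hsub, norm_div, norm_mul, pow_two, mul_assoc]
    exact div_le_div₀ (mul_nonneg hM ((norm_nonneg _).trans hgc))
      (mul_le_mul hg hgc (norm_nonneg _) hM) hpos hden

/-- Block inversion along `1 = P + (1 - P)`: `K` inverts the compression of `T` to the range of
`1 - P`, and `τ` inverts the Schur complement `a - c` of that block. -/
theorem mul_schur_eq_one {R A : Type*} [CommRing R] [Ring A] [Algebra R A] {P T K : A}
    {a c τ : R} (hP : IsIdempotentElem P) (hK : (1 - P) * T * K = 1 - P)
    (ha : P * T * P = a • P) (hc : P * T * K * T * P = c • P) (hτ : τ * (a - c) = 1) :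
    T * (τ • P - τ • (P * T * K) - τ • (K * T * P) + K + τ • (K * T * P * (P * T * K))) = 1 := by
  have hTK : T * K = 1 - P + P * T * K := by
    rw [← hK]; noncomm_ring
  have hTY : T * (K * T * P) = T * P - a • P + c • P := by
    rw [← hc, ← ha, ← mul_assoc, ← mul_assoc, hTK]; noncomm_ring
  have hPX : P * (P * T * K) = P * T * K := by rw [← mul_assoc, ← mul_assoc, hP.eq]
  have hTYX : T * (K * T * P * (P * T * K)) =
      T * P * (P * T * K) - a • (P * T * K) + c • (P * T * K) := by
    rw [← mul_assoc, hTY]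
    simp only [sub_mul, add_mul, smul_mul_assoc, hPX]
  simp only [mul_add, mul_sub, mul_smul_comm, hTY, hTYX, hTK]
  rw [show T * (P * T * K) = T * P * (P * T * K) by rw [mul_assoc T P, hPX]]
  linear_combination (norm := module) hτ • (P - P * T * K)

theorem norm_le_of_mul_mul_eq_smul {E : Type*} [NormedRing E] [NormedAlgebra ℂ E] {P M : E}
    {c : ℂ} (hP0 : P ≠ 0) (hP : ‖P‖ ≤ 1) (h : P * M * P = c • P) : ‖c‖ ≤ ‖M‖ := by
  refine le_of_mul_le_mul_right ?_ (norm_pos_iff.mpr hP0)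
  calc ‖c‖ * ‖P‖ = ‖P * M * P‖ := by rw [h, norm_smul]
    _ ≤ ‖P‖ * ‖M‖ * ‖P‖ := norm_mul₃_le
    _ ≤ ‖M‖ * ‖P‖ := by gcongr; exact mul_le_of_le_one_left (norm_nonneg M) hP

theorem exists_mul_eq_one_norm_sub_smul_le {E : Type*} [NormedRing E] [NormedAlgebra ℂ E]
    {P T K : E} {g c : ℂ} {M1 M2 ℓ : ℝ}
    (hP : IsIdempotentElem P) (hPn : ‖P‖ ≤ 1) (hK : (1 - P) * T * K = 1 - P)
    (hPTP : P * T * P = g⁻¹ • P) (hc : P * T * K * T * P = c • P)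
    (hg0 : g ≠ 0) (hg : ‖g‖ ≤ M1) (hcn : ‖c‖ ≤ M2 ^ 2 / ℓ)
    (hX : ‖P * T * K‖ ≤ M2 / ℓ) (hY : ‖K * T * P‖ ≤ M2 / ℓ) (hKn : ‖K‖ ≤ 1 / ℓ)
    (hℓ : M1 * M2 ^ 2 < ℓ) :
    ∃ R, T * R = 1 ∧ ‖R - g • P‖ ≤
      (M1 ^ 2 * M2 ^ 2 + 2 * M1 * M2 + M1 * M2 ^ 2 / ℓ) / (ℓ - M1 * M2 ^ 2) + 1 / ℓ := by
  have hM1 : 0 ≤ M1 := (norm_nonneg g).trans hg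
  have hℓpos : 0 < ℓ := lt_of_le_of_lt (by positivity) hℓ
  have hq : M1 * (M2 ^ 2 / ℓ) < 1 := by rwa [← mul_div_assoc, div_lt_one hℓpos]
  obtain ⟨τ, hτ, hτn, hτg⟩ := exists_mul_inv_sub_eq_one hg0 hg hcn hq
  set X := P * T * K
  set Y := K * T * P
  refine ⟨_, mul_schur_eq_one hP hK hPTP hc hτ, ?_⟩
  have hτ0 : 0 ≤ M1 / (1 - M1 * (M2 ^ 2 / ℓ)) := (norm_nonneg τ).trans hτn
  have hX0 : 0 ≤ M2 / ℓ := (norm_nonneg X).trans hX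
  calc ‖τ • P - τ • X - τ • Y + K + τ • (Y * X) - g • P‖
      = ‖(τ - g) • P - τ • X - τ • Y + K + τ • (Y * X)‖ := by congr 1; module
    _ ≤ ‖(τ - g) • P‖ + ‖τ • X‖ + ‖τ • Y‖ + ‖K‖ + ‖τ • (Y * X)‖ :=
      norm_add_le_of_le (norm_add_le_of_le (norm_sub_le_of_le (norm_sub_le_of_le le_rfl le_rfl)
        le_rfl) le_rfl) le_rfl
    _ ≤ M1 ^ 2 * (M2 ^ 2 / ℓ) / (1 - M1 * (M2 ^ 2 / ℓ)) * 1
        + M1 / (1 - M1 * (M2 ^ 2 / ℓ)) * (M2 / ℓ) + M1 / (1 - M1 * (M2 ^ 2 / ℓ)) * (M2 / ℓ)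
        + 1 / ℓ + M1 / (1 - M1 * (M2 ^ 2 / ℓ)) * (M2 / ℓ * (M2 / ℓ)) := by
      simp only [norm_smul]
      gcongr
      exact (norm_mul_le _ _).trans (by gcongr)
    _ = (M1 ^ 2 * M2 ^ 2 + 2 * M1 * M2 + M1 * M2 ^ 2 / ℓ) / (ℓ - M1 * M2 ^ 2) + 1 / ℓ := by
      have : ℓ - M1 * M2 ^ 2 ≠ 0 := by linarith
      field_simp
      ring

section Matrices

variable {ι : Type*} [Fintype ι]

noncomputable def meanProj (ι : Type*) [Fintype ι] : Matrix ι ι ℂ :=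
  (Fintype.card ι : ℂ)⁻¹ • vecMulVec 1 1

theorem vecMulVec_one_mul_mul_vecMulVec_one (M : Matrix ι ι ℂ) :
    vecMulVec 1 1 * M * vecMulVec 1 1 = (1 ⬝ᵥ M *ᵥ 1) • vecMulVec (1 : ι → ℂ) 1 := by
  rw [vecMulVec_mul, vecMulVec_mul_vecMulVec, ← dotProduct_mulVec, vecMulVec_smul]

theorem meanProj_mul_mul_meanProj (M : Matrix ι ι ℂ) :
    meanProj ι * M * meanProj ι = ((Fintype.card ι : ℂ)⁻¹ * (1 ⬝ᵥ M *ᵥ 1)) • meanProj ι := by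
  simp only [meanProj, smul_mul_assoc, Matrix.mul_smul, vecMulVec_one_mul_mul_vecMulVec_one,
    smul_smul]
  ring_nf

theorem meanProj_ne_zero [Nonempty ι] : meanProj ι ≠ 0 := by
  obtain ⟨i⟩ := ‹Nonempty ι›
  intro h
  simpa [meanProj, vecMulVec_apply] using congrFun (congrFun h i) i

theorem mul_meanProj_eq_zero {A : Matrix ι ι ℂ} (h : A *ᵥ 1 = 0) : A * meanProj ι = 0 := by
  rw [meanProj, Matrix.mul_smul, mul_vecMulVec, h, zero_vecMulVec, smul_zero]

theorem meanProj_mul_eq_zero {A : Matrix ι ι ℂ} (h : 1 ᵥ* A = 0) : meanProj ι * A = 0 := by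
  rw [meanProj, Matrix.smul_mul, vecMulVec_mul, h, vecMulVec_zero, smul_zero]

variable [DecidableEq ι]

theorem isStarProjection_meanProj : IsStarProjection (meanProj ι) := by
  refine ⟨?_, ?_⟩
  · rcases isEmpty_or_nonempty ι with h | h
    · exact Subsingleton.elim _ _
    · have := meanProj_mul_mul_meanProj (ι := ι) 1
      simp only [mul_one, Matrix.one_mulVec, dotProduct_one, Pi.one_apply, Finset.sum_const,
        Finset.card_univ, nsmul_eq_mul] at this
      rwa [inv_mul_cancel₀ (by simp), one_smul] at this
  · simp only [IsSelfAdjoint, meanProj, star_smul, star_inv₀, star_natCast]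
    congr 1
    ext i j
    simp [vecMulVec_apply]

theorem sum_eq_zero_of_meanProj_eq_zero {v : EuclideanSpace ℂ ι}
    (hv : toEuclideanCLM (𝕜 := ℂ) (meanProj ι) v = 0) : ∑ i, v i = 0 := by
  rcases isEmpty_or_nonempty ι with h | ⟨⟨i⟩⟩
  · simp
  have := congrArg (fun w => w i) hv
  simp [meanProj, mulVec, dotProduct] at this
  exact this.resolve_left (Fintype.card_pos_iff.mpr ⟨i⟩).ne'

theorem isUnit_of_toEuclideanCLM_eq_zero {W : Matrix ι ι ℂ}
    (hW : ∀ v, toEuclideanCLM (𝕜 := ℂ) W v = 0 → v = 0) : IsUnit W := by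
  refine mulVec_injective_iff_isUnit.mp fun x y hxy => ?_
  have := hW (WithLp.toLp 2 (x - y)) (by simp [hxy])
  simpa [sub_eq_zero] using this

-- `K` is obtained from the inverse of `S + P`, which is injective because `P * (S + P) = P`.
theorem exists_mul_eq_one_sub_of_le_norm {P S : Matrix ι ι ℂ} (hP : IsStarProjection P)
    (hPS : P * S = 0) {ℓ : ℝ} (hℓ : 0 < ℓ)
    (hS : ∀ v, toEuclideanCLM (𝕜 := ℂ) P v = 0 → ℓ * ‖v‖ ≤ ‖toEuclideanCLM (𝕜 := ℂ) S v‖) :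
    ∃ K, S * K = 1 - P ∧ P * K = 0 ∧ ‖K‖ ≤ 1 / ℓ := by
  have hPW : P * (S + P) = P := by rw [mul_add, hPS, hP.isIdempotentElem.eq, zero_add]
  have hW : IsUnit (S + P) := by
    refine isUnit_of_toEuclideanCLM_eq_zero fun v hv => ?_
    have hPv : toEuclideanCLM (𝕜 := ℂ) P v = 0 := by
      rw [← hPW, map_mul, mul_apply_eq_comp, hv, map_zero]
    have hSv : toEuclideanCLM (𝕜 := ℂ) S v = 0 := by
      rwa [map_add, _root_.add_apply, hPv, add_zero] at hv
    have := hS v hPv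
    rw [hSv, norm_zero] at this
    exact norm_le_zero_iff.mp (nonpos_of_mul_nonpos_right this hℓ)
  obtain ⟨W', hW'⟩ := hW.exists_right_inv
  set K := W' * (1 - P)
  have hPK : P * K = 0 :=
    calc P * K = P * ((S + P) * W') * (1 - P) := by rw [← mul_assoc P (S + P), hPW, mul_assoc]
      _ = 0 := by rw [hW', mul_one, hP.mul_one_sub_self]
  have hSK : S * K = 1 - P := by
    rw [← add_sub_cancel_right S P, sub_mul, hPK, sub_zero, ← mul_assoc, hW', one_mul]
  refine ⟨K, hSK, hPK, ContinuousLinearMap.opNorm_le_bound _ (by positivity) fun y => ?_⟩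
  have hPKy : toEuclideanCLM (𝕜 := ℂ) P (toEuclideanCLM (𝕜 := ℂ) K y) = 0 := by
    rw [← mul_apply_eq_comp, ← map_mul, hPK, map_zero, _root_.zero_apply]
  calc ‖toEuclideanCLM (𝕜 := ℂ) K y‖
      ≤ ℓ⁻¹ * ‖toEuclideanCLM (𝕜 := ℂ) S (toEuclideanCLM (𝕜 := ℂ) K y)‖ := by
        rw [le_inv_mul_iff₀ hℓ]; exact hS _ hPKy
    _ = ℓ⁻¹ * ‖toEuclideanCLM (𝕜 := ℂ) (1 - P) y‖ := by
        rw [← mul_apply_eq_comp, ← map_mul, hSK]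
    _ ≤ 1 / ℓ * ‖y‖ := by
        rw [one_div]
        gcongr
        exact (ContinuousLinearMap.le_opNorm _ _).trans
          (mul_le_of_le_one_left (norm_nonneg y) hP.one_sub.norm_le)

theorem exists_mul_eq_one_sub_of_compression {P D A : Matrix ι ι ℂ} (hP : IsStarProjection P)
    (hPA : P * A = 0) (hAP : A * P = 0) {μ M : ℝ} (hD : ‖D‖ ≤ M) (hM : M < μ)
    (hA : ∀ v, toEuclideanCLM (𝕜 := ℂ) P v = 0 → μ * ‖v‖ ≤ ‖toEuclideanCLM (𝕜 := ℂ) A v‖) :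
    ∃ K, (1 - P) * (D + A) * K = 1 - P ∧ ‖K‖ ≤ 1 / (μ - M) := by
  have hQAQ : (1 - P) * A * (1 - P) = A := by
    rw [sub_mul, one_mul, hPA, sub_zero, mul_sub, mul_one, hAP, sub_zero]
  have hS : (1 - P) * (D + A) * (1 - P) = A + (1 - P) * D * (1 - P) := by
    rw [mul_add, add_mul, hQAQ, add_comm]
  have hQDQ : ‖(1 - P) * D * (1 - P)‖ ≤ M :=
    (norm_mul_le_of_le (norm_mul_le_of_le hP.one_sub.norm_le hD) hP.one_sub.norm_le).trans_eq
      (by ring)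
  obtain ⟨K, hSK, hPK, hK⟩ := exists_mul_eq_one_sub_of_le_norm hP
    (by rw [← mul_assoc, ← mul_assoc, hP.mul_one_sub_self, zero_mul, zero_mul]) (sub_pos.mpr hM)
    fun v hv => calc
      (μ - M) * ‖v‖ ≤ ‖toEuclideanCLM (𝕜 := ℂ) A v‖ -
          ‖toEuclideanCLM (𝕜 := ℂ) ((1 - P) * D * (1 - P)) v‖ := by
        rw [sub_mul]
        exact sub_le_sub (hA v hv) ((ContinuousLinearMap.le_opNorm _ _).trans
          (mul_le_mul_of_nonneg_right hQDQ (norm_nonneg _)))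
      _ ≤ ‖toEuclideanCLM (𝕜 := ℂ) ((1 - P) * (D + A) * (1 - P)) v‖ := by
        rw [hS, map_add, _root_.add_apply]
        exact norm_sub_le_norm_add _ _
  have hQK : (1 - P) * K = K := by rw [sub_mul, one_mul, hPK, sub_zero]
  refine ⟨K, ?_, hK⟩
  rw [← hQK, ← mul_assoc, hSK]

theorem exists_mul_eq_one_norm_sub_meanProj_le [Nonempty ι] (γ : ι → ℂ) (A : Matrix ι ι ℂ)
    (hA1 : A *ᵥ 1 = 0) (h1A : 1 ᵥ* A = 0) {μ M1 M2 : ℝ}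
    (hA : ∀ v, toEuclideanCLM (𝕜 := ℂ) (meanProj ι) v = 0 →
      μ * ‖v‖ ≤ ‖toEuclideanCLM (𝕜 := ℂ) A v‖)
    (hsum : ∑ i, γ i ≠ 0) (g : ℂ) (hg : g = Fintype.card ι * (∑ i, γ i)⁻¹)
    (hgM : ‖g‖ ≤ M1) (hγM : ∀ i, ‖γ i‖ ≤ M2) (hμ : M2 + M1 * M2 ^ 2 < μ) :
    ∃ R, (diagonal γ + A) * R = 1 ∧ ‖R - g • meanProj ι‖ ≤
      (M1 ^ 2 * M2 ^ 2 + 2 * M1 * M2 + M1 * M2 ^ 2 / (μ - M2)) / (μ - M2 - M1 * M2 ^ 2) +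
        1 / (μ - M2) := by
  set P := meanProj ι
  set D := diagonal γ
  have hP : IsStarProjection P := isStarProjection_meanProj
  have hPA : P * A = 0 := meanProj_mul_eq_zero h1A
  have hAP : A * P = 0 := mul_meanProj_eq_zero hA1
  have hM2 : 0 ≤ M2 := (norm_nonneg _).trans (hγM (Classical.arbitrary ι))
  have hM1 : 0 ≤ M1 := (norm_nonneg _).trans hgM
  have hℓ : M1 * M2 ^ 2 < μ - M2 := by linarith
  have hℓpos : 0 < μ - M2 := lt_of_le_of_lt (by positivity) hℓ
  have hD : ‖D‖ ≤ M2 := by rw [l2_opNorm_diagonal]; exact (pi_norm_le_iff_of_nonneg hM2).mpr hγM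
  obtain ⟨K, hK', hK⟩ :=
    exists_mul_eq_one_sub_of_compression hP hPA hAP hD (sub_pos.mp hℓpos) hA
  have hPT : P * (D + A) = P * D := by rw [mul_add, hPA, add_zero]
  have hTP : (D + A) * P = D * P := by rw [add_mul, hAP, add_zero]
  have hPTP : P * (D + A) * P = g⁻¹ • P := by
    rw [hPT, meanProj_mul_mul_meanProj]
    congr 1
    simp [hg, D, dotProduct, mulVec_diagonal, mul_comm]
  have hc : P * (D + A) * K * (D + A) * P =
      ((Fintype.card ι : ℂ)⁻¹ * (1 ⬝ᵥ (D * K * D) *ᵥ 1)) • P := by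
    rw [mul_assoc _ (D + A) P, hTP, hPT, ← meanProj_mul_mul_meanProj (D * K * D)]
    simp only [mul_assoc]
    rfl
  have hDKD : ‖D * K * D‖ ≤ M2 ^ 2 / (μ - M2) :=
    (norm_mul_le_of_le (norm_mul_le_of_le hD hK) hD).trans_eq (by ring)
  have hX : ‖P * (D + A) * K‖ ≤ M2 / (μ - M2) := by
    rw [hPT]
    exact (norm_mul_le_of_le (norm_mul_le_of_le hP.norm_le hD) hK).trans_eq (by ring)
  have hY : ‖K * (D + A) * P‖ ≤ M2 / (μ - M2) := by
    rw [mul_assoc, hTP, ← mul_assoc]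
    exact (norm_mul_le_of_le (norm_mul_le_of_le hK hD) hP.norm_le).trans_eq (by ring)
  exact exists_mul_eq_one_norm_sub_smul_le hP.isIdempotentElem hP.norm_le hK' hPTP hc
    (by simp [hg, hsum]) hgM
    ((norm_le_of_mul_mul_eq_smul meanProj_ne_zero hP.norm_le (meanProj_mul_mul_meanProj _)).trans
      hDKD) hX hY hK hℓ

theorem norm_toEuclideanCLM_map_ofReal_sq (M : Matrix ι ι ℝ) (v : EuclideanSpace ℂ ι) :
    ‖toEuclideanCLM (𝕜 := ℂ) (M.map (↑)) v‖ ^ 2 =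
      ‖toEuclideanCLM (𝕜 := ℝ) M (WithLp.toLp 2 fun i => (v i).re)‖ ^ 2 +
        ‖toEuclideanCLM (𝕜 := ℝ) M (WithLp.toLp 2 fun i => (v i).im)‖ ^ 2 := by
  simp only [EuclideanSpace.norm_sq_eq, ← Finset.sum_add_distrib, Complex.sq_norm,
    Complex.normSq_apply]
  refine Finset.sum_congr rfl fun i _ => ?_
  simp [mulVec, dotProduct, Complex.re_sum, Complex.im_sum, sq]

theorem norm_sq_eq_re_add_im (v : EuclideanSpace ℂ ι) :
    ‖v‖ ^ 2 = ‖(WithLp.toLp 2 fun i => (v i).re : EuclideanSpace ℝ ι)‖ ^ 2 +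
        ‖(WithLp.toLp 2 fun i => (v i).im : EuclideanSpace ℝ ι)‖ ^ 2 := by
  simpa using norm_toEuclideanCLM_map_ofReal_sq 1 v

end Matrices

section Laplacian

variable {n : ℕ}

theorem lambda2_mul_norm_le (L : Matrix (Fin n) (Fin n) ℝ) {w : EuclideanSpace ℝ (Fin n)}
    (hw : ⟪w, (WithLp.equiv 2 (Fin n → ℝ)).symm 1⟫ = 0) :
    lambda2 L * ‖w‖ ≤ ‖toEuclideanCLM (𝕜 := ℝ) L w‖ := by
  rcases eq_or_ne w 0 with rfl | hw0
  · simp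
  set u := ‖w‖⁻¹ • w
  have hu : ⟪u, (WithLp.equiv 2 (Fin n → ℝ)).symm 1⟫ = 0 ∧ ‖u‖ = 1 :=
    ⟨by rw [inner_smul_left, hw, mul_zero], norm_smul_inv_norm hw0⟩
  have hbdd : BddBelow (Set.range fun v : {v : EuclideanSpace ℝ (Fin n) //
      ⟪v, (WithLp.equiv 2 (Fin n → ℝ)).symm 1⟫ = 0 ∧ ‖v‖ = 1} =>
      ⟪(v : EuclideanSpace ℝ (Fin n)), toEuclideanCLM (𝕜 := ℝ) L v⟫) := by
    refine ⟨-‖toEuclideanCLM (𝕜 := ℝ) L‖, ?_⟩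
    rintro _ ⟨⟨v, -, hv⟩, rfl⟩
    have := (abs_real_inner_le_norm v (toEuclideanCLM (𝕜 := ℝ) L v)).trans
      (mul_le_mul_of_nonneg_left ((toEuclideanCLM (𝕜 := ℝ) L).le_opNorm v) (norm_nonneg v))
    rw [hv, mul_one, one_mul] at this
    exact neg_le_of_abs_le this
  calc lambda2 L * ‖w‖ ≤ ⟪u, toEuclideanCLM (𝕜 := ℝ) L u⟫ * ‖w‖ := by
        gcongr
        exact ciInf_le hbdd ⟨u, hu⟩
    _ ≤ ‖toEuclideanCLM (𝕜 := ℝ) L u‖ * ‖w‖ := by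
        gcongr
        simpa [hu.2] using real_inner_le_norm u (toEuclideanCLM (𝕜 := ℝ) L u)
    _ = ‖toEuclideanCLM (𝕜 := ℝ) L w‖ := by
        rw [map_smul, norm_smul, norm_inv, norm_norm, mul_comm, ← mul_assoc,
          mul_inv_cancel₀ (norm_ne_zero_iff.mpr hw0), one_mul]

theorem lambda2_mul_norm_le_complex (L : Matrix (Fin n) (Fin n) ℝ) {v : EuclideanSpace ℂ (Fin n)}
    (hv : ∑ i, v i = 0) :
    lambda2 L * ‖v‖ ≤ ‖toEuclideanCLM (𝕜 := ℂ) (L.map (↑)) v‖ := by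
  rcases le_or_gt (lambda2 L) 0 with hl | hl
  · exact (mul_nonpos_of_nonpos_of_nonneg hl (norm_nonneg v)).trans (norm_nonneg _)
  have hre : ⟪(WithLp.toLp 2 fun i => (v i).re : EuclideanSpace ℝ (Fin n)),
      (WithLp.equiv 2 (Fin n → ℝ)).symm 1⟫ = 0 := by
    simp [PiLp.inner_apply, ← Complex.re_sum, hv]
  have him : ⟪(WithLp.toLp 2 fun i => (v i).im : EuclideanSpace ℝ (Fin n)),
      (WithLp.equiv 2 (Fin n → ℝ)).symm 1⟫ = 0 := by
    simp [PiLp.inner_apply, ← Complex.im_sum, hv]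
  refine le_of_pow_le_pow_left₀ two_ne_zero (norm_nonneg _) ?_
  rw [mul_pow, norm_sq_eq_re_add_im, norm_toEuclideanCLM_map_ofReal_sq, mul_add, ← mul_pow,
    ← mul_pow]
  exact add_le_add (pow_le_pow_left₀ (by positivity) (lambda2_mul_norm_le L hre) 2)
    (pow_le_pow_left₀ (by positivity) (lambda2_mul_norm_le L him) 2)

end Laplacian

theorem stmt_2_general {m : ℕ} (L : Matrix (Fin (m + 2)) (Fin (m + 2)) ℝ)
    (hsym : L.IsSymm) (hL1 : L *ᵥ 1 = 0)
    (s0 : ℂ)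
    (γ : Fin (m + 2) → ℂ) (hγ : ∑ i, γ i ≠ 0)
    (g : ℂ) (hgdef : g = ((m + 2 : ℕ) : ℂ) * (∑ i, γ i)⁻¹)
    (M1 M2 : ℝ)
    (hgM : ‖g‖ ≤ M1) (hγM : ∀ i, ‖γ i‖ ≤ M2)
    (hlam : M2 + M1 * M2 ^ 2 < lambda2 L / ‖s0‖) :
    IsUnit (Matrix.diagonal γ + s0⁻¹ • L.map Complex.ofReal) ∧
      ‖(Matrix.diagonal γ + s0⁻¹ • L.map Complex.ofReal)⁻¹ -
          (((m + 2 : ℕ) : ℂ))⁻¹ • g • Matrix.vecMulVec 1 1‖ ≤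
        (M1 ^ 2 * M2 ^ 2 + 2 * M1 * M2 +
              M1 * M2 ^ 2 / (lambda2 L / ‖s0‖ - M2)) /
            (lambda2 L / ‖s0‖ - M2 - M1 * M2 ^ 2) +
          1 / (lambda2 L / ‖s0‖ - M2) := by
  set A := s0⁻¹ • L.map Complex.ofReal
  have hA1 : A *ᵥ 1 = 0 := by
    ext i
    have := congrFun hL1 i
    simp only [mulVec, dotProduct, Pi.one_apply, mul_one, Pi.zero_apply] at this
    simp [A, mulVec, dotProduct, ← Finset.mul_sum, ← Complex.ofReal_sum, this]
  have h1A : 1 ᵥ* A = 0 := by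
    rw [← mulVec_transpose, transpose_smul, ← transpose_map, hsym.eq, hA1]
  have hA : ∀ v, toEuclideanCLM (𝕜 := ℂ) (meanProj (Fin (m + 2))) v = 0 →
      lambda2 L / ‖s0‖ * ‖v‖ ≤ ‖toEuclideanCLM (𝕜 := ℂ) A v‖ := fun v hv => by
    rw [map_smul, _root_.smul_apply, norm_smul, norm_inv, div_mul_eq_mul_div,
      div_eq_inv_mul]
    exact mul_le_mul_of_nonneg_left
      (lambda2_mul_norm_le_complex L (sum_eq_zero_of_meanProj_eq_zero hv)) (by positivity)
  obtain ⟨R, hR, hRn⟩ := exists_mul_eq_one_norm_sub_meanProj_le γ A hA1 h1A hA hγ g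
    (by simpa using hgdef) hgM hγM hlam
  refine ⟨IsUnit.of_mul_eq_one R hR, ?_⟩
  rw [inv_eq_right_inv hR, smul_comm]
  simpa [meanProj] using hRn

/-- **Lemma 2.** For `n = m+2 ≥ 2`, a real symmetric PSD Laplacian `L`
with `L 𝟙 = 0`, `s0 ≠ 0`, `γᵢ = gᵢ⁻¹(s0)` with `∑ γᵢ ≠ 0`, `ḡ = n (∑ γᵢ)⁻¹`,
`|ḡ| ≤ M1`, `max |γᵢ| ≤ M2` and `λ₂(L)/|s0| > M2 + M1 M2²`, the matrix `D + L/s0`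
is invertible and `‖(D + L/s0)⁻¹ - (1/n) ḡ 𝟙𝟙ᵀ‖` obeys the stated bound
(spectral norm). -/
theorem stmt_2 {m : ℕ} (L : Matrix (Fin (m + 2)) (Fin (m + 2)) ℝ)
    (hsym : L.IsSymm) (hpsd : L.PosSemidef) (hL1 : L *ᵥ 1 = 0)
    (s0 : ℂ) (hs0 : s0 ≠ 0)
    (γ : Fin (m + 2) → ℂ) (hγ : ∑ i, γ i ≠ 0)
    (g : ℂ) (hgdef : g = ((m + 2 : ℕ) : ℂ) * (∑ i, γ i)⁻¹)
    (M1 M2 : ℝ) (hM1 : 0 < M1) (hM2 : 0 < M2)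
    (hgM : ‖g‖ ≤ M1) (hγM : ∀ i, ‖γ i‖ ≤ M2)
    (hlam : M2 + M1 * M2 ^ 2 < lambda2 L / ‖s0‖) :
    IsUnit (Matrix.diagonal γ + s0⁻¹ • L.map Complex.ofReal) ∧
      ‖(Matrix.diagonal γ + s0⁻¹ • L.map Complex.ofReal)⁻¹ -
          (((m + 2 : ℕ) : ℂ))⁻¹ • g • Matrix.vecMulVec 1 1‖ ≤
        (M1 ^ 2 * M2 ^ 2 + 2 * M1 * M2 +
              M1 * M2 ^ 2 / (lambda2 L / ‖s0‖ - M2)) /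
            (lambda2 L / ‖s0‖ - M2 - M1 * M2 ^ 2) +
          1 / (lambda2 L / ‖s0‖ - M2) :=
  stmt_2_general L hsym hL1 s0 γ hγ g hgdef M1 M2 hgM hγM hlam
end

section
/- Let n ≥ 2, let M1, M2 > 0 and ℓ > M2 + M1·M2². Let ḡ ∈ ℂ with ḡ ≠ 0 and |ḡ| ≤ M1, let h ∈ ℂ^{n−1} with Euclidean norm ‖h‖ ≤ M2, and let H22 be an invertible (n−1)×(n−1) complex matrix with ‖H22^{-1}‖ ≤ 1/(ℓ − M2). Then the block matrix H = [[ḡ^{-1}, hᵀ],[h, H22]] is invertible and ‖H^{-1} − ḡ·e1 e1ᵀ‖ ≤ (M1²M2² + 2M1M2 + M1M2²/(ℓ − M2)) / (ℓ − M2 − M1M2²) + 1/(ℓ − M2), where e1 ∈ ℝ^n is the first standard basis vector, ‖·‖ denotes the spectral norm, and hᵀ is the transpose (without conjugation) of h. -/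
/-!
`H` is inverted through the Schur complement `s = ḡ⁻¹ - hᵀ H22⁻¹ h` of its lower right block.
Since `‖hᵀ H22⁻¹ h‖ ≤ M2² / (ℓ - M2)` and `M1 M2² < ℓ - M2`, this is a small perturbation of
`ḡ⁻¹`, so `s` is invertible with `‖s⁻¹‖ ≤ M1 (ℓ - M2) / (ℓ - M2 - M1 M2²)` (Neumann series).
The upper left block of `H⁻¹ - ḡ e₁e₁ᵀ` is `s⁻¹ - ḡ = s⁻¹ (hᵀ H22⁻¹ h) ḡ`, the other blocks are
those of the Schur complement formula for `H⁻¹`, and the spectral norm of a `2 × 2` block matrix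
is at most the sum of the norms of its blocks.
-/

open Matrix
open scoped Matrix.Norms.L2Operator Ring

section NormedRing

variable {R : Type*} [NormedRing R] [HasSummableGeomSeries R] {a x : R} {α ξ : ℝ}

theorem isUnit_sub_of_norm_le (ha : IsUnit a) (hai : ‖a⁻¹ʳ‖ ≤ α) (hx : ‖x‖ ≤ ξ)
    (h : α * ξ < 1) : IsUnit (a - x) := by
  have hsmall : ‖a⁻¹ʳ * x‖ < 1 :=
    (norm_mul_le _ _).trans_lt
      ((mul_le_mul hai hx (norm_nonneg x) ((norm_nonneg _).trans hai)).trans_lt h)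
  have hfactor : a - x = a * (1 - a⁻¹ʳ * x) := by
    rw [mul_sub, mul_one, ← mul_assoc, Ring.mul_inverse_cancel a ha, one_mul]
  rw [hfactor]
  exact ha.mul (isUnit_one_sub_of_norm_lt_one hsmall)

theorem norm_inverse_sub_le (ha : IsUnit a) (hai : ‖a⁻¹ʳ‖ ≤ α) (hx : ‖x‖ ≤ ξ)
    (h : α * ξ < 1) : ‖(a - x)⁻¹ʳ‖ ≤ α / (1 - α * ξ) := by
  set u := (a - x)⁻¹ʳ
  have hu : (a - x) * u = 1 :=
    Ring.mul_inverse_cancel _ (isUnit_sub_of_norm_le ha hai hx h)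
  have hfix : u = a⁻¹ʳ + a⁻¹ʳ * x * u :=
    calc u = a⁻¹ʳ * (a * u) := by rw [← mul_assoc, Ring.inverse_mul_cancel _ ha, one_mul]
      _ = a⁻¹ʳ * ((a - x) * u + x * u) := by rw [sub_mul, sub_add_cancel]
      _ = a⁻¹ʳ + a⁻¹ʳ * x * u := by rw [hu, mul_add, mul_one, mul_assoc]
  have hle : ‖u‖ ≤ α + α * ξ * ‖u‖ :=
    calc ‖u‖ ≤ ‖a⁻¹ʳ‖ + ‖a⁻¹ʳ * x * u‖ := by nth_rw 1 [hfix]; exact norm_add_le _ _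
      _ ≤ ‖a⁻¹ʳ‖ + ‖a⁻¹ʳ‖ * ‖x‖ * ‖u‖ := by
        gcongr
        exact (norm_mul_le _ _).trans (by gcongr; exact norm_mul_le _ _)
      _ ≤ α + α * ξ * ‖u‖ := by
        have hα : 0 ≤ α := (norm_nonneg _).trans hai
        gcongr
  rw [le_div_iff₀ (by linarith)]
  linarith

end NormedRing

namespace Matrix

section SchurComplement

variable {α : Type*} [CommRing α] {m n : Type*} [Fintype m] [Fintype n] [DecidableEq m]
  [DecidableEq n] {A : Matrix m m α} {B : Matrix m n α} {C : Matrix n m α} {D : Matrix n n α}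

theorem isUnit_fromBlocks_of_isUnit₂₂ (hD : IsUnit D) (hS : IsUnit (A - B * D⁻¹ * C)) :
    IsUnit (fromBlocks A B C D) := by
  let _ := hD.invertible
  rwa [isUnit_fromBlocks_iff_of_invertible₂₂, invOf_eq_nonsing_inv]

theorem inv_fromBlocks_of_isUnit₂₂ (hD : IsUnit D) (hS : IsUnit (A - B * D⁻¹ * C)) :
    (fromBlocks A B C D)⁻¹ =
      fromBlocks (A - B * D⁻¹ * C)⁻¹ (-((A - B * D⁻¹ * C)⁻¹ * B * D⁻¹))
        (-(D⁻¹ * C * (A - B * D⁻¹ * C)⁻¹))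
        (D⁻¹ + D⁻¹ * C * (A - B * D⁻¹ * C)⁻¹ * B * D⁻¹) := by
  let _ := hD.invertible
  have hS' : IsUnit (A - B * ⅟D * C) := by rwa [invOf_eq_nonsing_inv]
  let _ := hS'.invertible
  let _ := (isUnit_fromBlocks_of_isUnit₂₂ hD hS).invertible
  rw [← invOf_eq_nonsing_inv, invOf_fromBlocks₂₂_eq]
  simp only [invOf_eq_nonsing_inv]

end SchurComplement

section L2OpNorm

variable {𝕜 : Type*} [RCLike 𝕜] {l m n p : Type*} [Fintype l] [Fintype m] [Fintype n]
  [Fintype p]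

theorem l2_opNorm_mul_le_of_le [DecidableEq m] [DecidableEq n] {A : Matrix l m 𝕜}
    {B : Matrix m n 𝕜} {a b : ℝ} (hA : ‖A‖ ≤ a) (hB : ‖B‖ ≤ b) : ‖A * B‖ ≤ a * b :=
  (l2_opNorm_mul A B).trans (mul_le_mul hA hB (norm_nonneg B) ((norm_nonneg A).trans hA))

theorem l2_opNorm_fromRows_zero_right [DecidableEq n] (A : Matrix m n 𝕜) :
    ‖fromRows A (0 : Matrix l n 𝕜)‖ = ‖A‖ := by
  have h := l2_opNorm_conjTranspose_mul_self (fromRows A (0 : Matrix l n 𝕜))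
  rw [conjTranspose_fromRows_eq_fromCols_conjTranspose, fromCols_mul_fromRows,
    conjTranspose_zero, Matrix.zero_mul, add_zero, l2_opNorm_conjTranspose_mul_self] at h
  exact (mul_self_inj (norm_nonneg _) (norm_nonneg _)).mp h.symm

theorem l2_opNorm_fromRows_zero_left [DecidableEq n] (B : Matrix l n 𝕜) :
    ‖fromRows (0 : Matrix m n 𝕜) B‖ = ‖B‖ := by
  have h := l2_opNorm_conjTranspose_mul_self (fromRows (0 : Matrix m n 𝕜) B)
  rw [conjTranspose_fromRows_eq_fromCols_conjTranspose, fromCols_mul_fromRows,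
    conjTranspose_zero, Matrix.zero_mul, zero_add, l2_opNorm_conjTranspose_mul_self] at h
  exact (mul_self_inj (norm_nonneg _) (norm_nonneg _)).mp h.symm

theorem l2_opNorm_fromRows_le [DecidableEq n] (A : Matrix m n 𝕜) (B : Matrix l n 𝕜) :
    ‖fromRows A B‖ ≤ ‖A‖ + ‖B‖ := by
  have h : fromRows A B = fromRows A 0 + fromRows 0 B := by
    ext (i | i) j <;> simp
  rw [h, ← l2_opNorm_fromRows_zero_right (l := l) A, ← l2_opNorm_fromRows_zero_left (m := m) B]
  exact norm_add_le _ _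

theorem l2_opNorm_fromCols_le [DecidableEq m] [DecidableEq n] [DecidableEq l]
    (A : Matrix m n 𝕜) (B : Matrix m l 𝕜) : ‖fromCols A B‖ ≤ ‖A‖ + ‖B‖ := by
  rw [← l2_opNorm_conjTranspose, conjTranspose_fromCols_eq_fromRows_conjTranspose,
    ← l2_opNorm_conjTranspose A, ← l2_opNorm_conjTranspose B]
  exact l2_opNorm_fromRows_le _ _

theorem l2_opNorm_fromBlocks_le [DecidableEq l] [DecidableEq m] [DecidableEq n]
    [DecidableEq p] (A : Matrix m n 𝕜) (B : Matrix m p 𝕜) (C : Matrix l n 𝕜)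
    (D : Matrix l p 𝕜) : ‖fromBlocks A B C D‖ ≤ ‖A‖ + ‖B‖ + ‖C‖ + ‖D‖ := by
  rw [← fromRows_fromCols_eq_fromBlocks]
  calc _ ≤ ‖fromCols A B‖ + ‖fromCols C D‖ := l2_opNorm_fromRows_le _ _
    _ ≤ ‖A‖ + ‖B‖ + (‖C‖ + ‖D‖) :=
      add_le_add (l2_opNorm_fromCols_le _ _) (l2_opNorm_fromCols_le _ _)
    _ = ‖A‖ + ‖B‖ + ‖C‖ + ‖D‖ := by ring

theorem l2_opNorm_of_const_unit (c : 𝕜) : ‖(of fun _ _ => c : Matrix Unit Unit 𝕜)‖ = ‖c‖ := by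
  have h : (of fun _ _ => c : Matrix Unit Unit 𝕜) = c • 1 := by ext; simp
  rw [h, norm_smul, norm_one, mul_one]

theorem l2_opNorm_replicateCol_unit (v : m → 𝕜) :
    ‖replicateCol Unit v‖ = √(∑ i, ‖v i‖ ^ 2) := by
  have h := l2_opNorm_conjTranspose_mul_self (replicateCol Unit v)
  have hprod : (replicateCol Unit v)ᴴ * replicateCol Unit v =
      of fun _ _ => ((∑ i, ‖v i‖ ^ 2 : ℝ) : 𝕜) := by
    ext; simp [Matrix.mul_apply, RCLike.conj_mul]
  rw [hprod, l2_opNorm_of_const_unit, RCLike.norm_ofReal, abs_of_nonneg (by positivity)] at h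
  rw [h, Real.sqrt_mul_self (norm_nonneg _)]

theorem l2_opNorm_replicateRow_unit [DecidableEq m] (v : m → 𝕜) :
    ‖replicateRow Unit v‖ = √(∑ i, ‖v i‖ ^ 2) := by
  rw [← l2_opNorm_conjTranspose, conjTranspose_replicateRow, l2_opNorm_replicateCol_unit]
  simp

theorem l2_opNorm_inv_fromBlocks_sub_le [DecidableEq m] [DecidableEq n] {A : Matrix m m 𝕜}
    {B : Matrix m n 𝕜} {C : Matrix n m 𝕜} {D : Matrix n n 𝕜} (hA : IsUnit A) (hD : IsUnit D)
    (hS : IsUnit (A - B * D⁻¹ * C)) :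
    ‖(fromBlocks A B C D)⁻¹ - fromBlocks A⁻¹ 0 0 0‖ ≤
      ‖(A - B * D⁻¹ * C)⁻¹‖ * ‖B‖ * ‖D⁻¹‖ * ‖C‖ * ‖A⁻¹‖ +
        ‖(A - B * D⁻¹ * C)⁻¹‖ * ‖B‖ * ‖D⁻¹‖ + ‖D⁻¹‖ * ‖C‖ * ‖(A - B * D⁻¹ * C)⁻¹‖ +
        (‖D⁻¹‖ + ‖D⁻¹‖ * ‖C‖ * ‖(A - B * D⁻¹ * C)⁻¹‖ * ‖B‖ * ‖D⁻¹‖) := by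
  set S := A - B * D⁻¹ * C with hS_def
  have htop : S⁻¹ - A⁻¹ = S⁻¹ * B * D⁻¹ * C * A⁻¹ := by
    rw [inv_sub_inv (iff_of_true hS hA), hS_def, sub_sub_cancel]
    simp only [Matrix.mul_assoc]
  have hdiff : (fromBlocks A B C D)⁻¹ - fromBlocks A⁻¹ 0 0 0 =
      fromBlocks (S⁻¹ * B * D⁻¹ * C * A⁻¹) (-(S⁻¹ * B * D⁻¹)) (-(D⁻¹ * C * S⁻¹))
        (D⁻¹ + D⁻¹ * C * S⁻¹ * B * D⁻¹) := by
    rw [inv_fromBlocks_of_isUnit₂₂ hD hS, ← hS_def, ← htop]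
    ext (i | i) (j | j) <;> simp
  rw [hdiff]
  refine (l2_opNorm_fromBlocks_le _ _ _ _).trans ?_
  rw [norm_neg, norm_neg]
  gcongr ?_ + ?_ + ?_ + ?_
  · exact l2_opNorm_mul_le_of_le (l2_opNorm_mul_le_of_le (l2_opNorm_mul_le_of_le
      (l2_opNorm_mul _ _) le_rfl) le_rfl) le_rfl
  · exact l2_opNorm_mul_le_of_le (l2_opNorm_mul _ _) le_rfl
  · exact l2_opNorm_mul_le_of_le (l2_opNorm_mul _ _) le_rfl
  · refine (norm_add_le _ _).trans (add_le_add le_rfl ?_)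
    exact l2_opNorm_mul_le_of_le (l2_opNorm_mul_le_of_le (l2_opNorm_mul_le_of_le
      (l2_opNorm_mul _ _) le_rfl) le_rfl) le_rfl

end L2OpNorm

end Matrix

-- The first coordinate is the `Unit` index, so `n = m + 2`.
/-- The combined estimate of Lemma 2: for the `n×n` (`n = m+2 ≥ 2`)
block matrix `H = [[ḡ⁻¹, hᵀ], [h, H22]]` with `|ḡ| ≤ M1`, `‖h‖ ≤ M2` (Euclidean norm),
`‖H22⁻¹‖ ≤ 1/(ℓ - M2)` and `ℓ > M2 + M1 M2²`, `H` is invertible and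
`‖H⁻¹ - ḡ e₁e₁ᵀ‖` obeys the stated bound (spectral norm). The `n` indices are
`Unit ⊕ Fin (m+1)`, the `Unit` index being the first coordinate. -/
theorem stmt_10 {m : ℕ} (M1 M2 ℓ : ℝ) (hM1 : 0 < M1) (hM2 : 0 < M2)
    (hℓ : M2 + M1 * M2 ^ 2 < ℓ)
    (g : ℂ) (hg : g ≠ 0) (hgM : ‖g‖ ≤ M1)
    (h : Fin (m + 1) → ℂ) (hh : Real.sqrt (∑ i, ‖h i‖ ^ 2) ≤ M2)
    (H22 : Matrix (Fin (m + 1)) (Fin (m + 1)) ℂ) (hH22 : IsUnit H22)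
    (hH22inv : ‖H22⁻¹‖ ≤ 1 / (ℓ - M2))
    (H : Matrix (Unit ⊕ Fin (m + 1)) (Unit ⊕ Fin (m + 1)) ℂ)
    (hH : H = Matrix.fromBlocks (Matrix.of fun _ _ => g⁻¹) (Matrix.of fun _ j => h j)
        (Matrix.of fun i _ => h i) H22) :
    IsUnit H ∧
      ‖H⁻¹ - g • Matrix.fromBlocks 1 0 0 0‖ ≤
        (M1 ^ 2 * M2 ^ 2 + 2 * M1 * M2 + M1 * M2 ^ 2 / (ℓ - M2)) /
            (ℓ - M2 - M1 * M2 ^ 2) +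
          1 / (ℓ - M2) := by
  subst hH
  have ha : 0 < ℓ - M2 := by nlinarith
  set d := 1 / (ℓ - M2)
  set A : Matrix Unit Unit ℂ := of fun _ _ => g⁻¹
  have hAinv : A⁻¹ = of fun _ _ => g := inv_eq_right_inv (by ext; simp [A, mul_apply, hg])
  have hA : IsUnit A := by simp [isUnit_iff_isUnit_det, det_unique, A, hg]
  have hAn : ‖A⁻¹ʳ‖ ≤ M1 := by rwa [← nonsing_inv_eq_ringInverse, hAinv, l2_opNorm_of_const_unit]
  have hB : ‖replicateRow Unit h‖ ≤ M2 := (l2_opNorm_replicateRow_unit h).trans_le hh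
  have hC : ‖replicateCol Unit h‖ ≤ M2 := (l2_opNorm_replicateCol_unit h).trans_le hh
  have hX : ‖replicateRow Unit h * H22⁻¹ * replicateCol Unit h‖ ≤ M2 * d * M2 :=
    l2_opNorm_mul_le_of_le (l2_opNorm_mul_le_of_le hB hH22inv) hC
  have hsmall : M1 * (M2 * d * M2) < 1 := by
    rw [show M1 * (M2 * d * M2) = M1 * M2 ^ 2 / (ℓ - M2) by ring, div_lt_one ha]
    linarith
  have hS := isUnit_sub_of_norm_le hA hAn hX hsmall
  have hSn := norm_inverse_sub_le hA hAn hX hsmall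
  rw [← nonsing_inv_eq_ringInverse] at hAn hSn
  refine ⟨isUnit_fromBlocks_of_isUnit₂₂ hH22 hS, ?_⟩
  have hcorner : (g • fromBlocks 1 0 0 0 : Matrix (Unit ⊕ Fin (m + 1)) (Unit ⊕ Fin (m + 1)) ℂ) =
      fromBlocks A⁻¹ 0 0 0 := by
    rw [hAinv, fromBlocks_smul]
    ext (i | i) (j | j) <;> simp
  rw [hcorner]
  set σ := M1 / (1 - M1 * (M2 * d * M2))
  calc _ ≤ _ := l2_opNorm_inv_fromBlocks_sub_le hA hH22 hS
    _ ≤ σ * M2 * d * M2 * M1 + σ * M2 * d + d * M2 * σ + (d + d * M2 * σ * M2 * d) := by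
      gcongr
    _ = _ := by
      have hδ : ℓ - M2 - M1 * M2 ^ 2 ≠ 0 := (by linarith : 0 < ℓ - M2 - M1 * M2 ^ 2).ne'
      simp only [σ, d]
      field_simp
      ring
end
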